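/- arXiv:2310.03601 — 2 statements merged into one kernel-verified Lean document; each statement's English description precedes it below -/
import Mathlib

section
/- Let G be a finite multigraph, ℓ ≥ 4, A a proper vertex subset with λ_G(x,y) ≥ ℓ for all x, y ∈ A, every edge incident with a vertex of A, and s ∉ A not incident with a bridge. Suppose F1, F2 are independent sets in the lifting graph L(G,s,τ_A) of sizes r1, r2, with dangerous sets D1, D2 such that F_i = δ(s) ∩ δ(D_i), and let α = |F1 ∩ F2|. If α > 0, r1 > α, r2 > α, and the complement of D1 ∪ D2 ∪ {s} contains a vertex of A, then r1 + r2 ≤ ⌊deg(s)/2⌋ + 2. -/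
namespace NW
open Classical
noncomputable section

/-- A multigraph on vertex type `V` with edge type `E`: each edge has two endpoints
(given with an arbitrary reference direction). -/
structure Multigraph (V : Type) (E : Type) where
  fst : E → V
  snd : E → V

namespace Multigraph

variable {V E : Type}

/-- Source of an oriented step `(e, b)`: traversing `e` forwards if `b = true`. -/
def src (G : Multigraph V E) (s : E × Bool) : V := if s.2 then G.fst s.1 else G.snd s.1

/-- Target of an oriented step. -/
def dst (G : Multigraph V E) (s : E × Bool) : V := if s.2 then G.snd s.1 else G.fst s.1

/-- `l` is a walk from `x` to `y` (a list of oriented steps). -/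
def IsWalk (G : Multigraph V E) (x y : V) (l : List (E × Bool)) : Prop :=
  l.Chain' (fun s t => G.dst s = G.src t) ∧
  ((l = [] ∧ x = y) ∨
    (∃ s t, l.head? = some s ∧ l.getLast? = some t ∧ G.src s = x ∧ G.dst t = y))

/-- A trail: a walk with pairwise distinct edges. -/
def IsTrail (G : Multigraph V E) (x y : V) (l : List (E × Bool)) : Prop :=
  G.IsWalk x y l ∧ (l.map Prod.fst).Nodup

/-- There exist `m` pairwise edge-disjoint `x`–`y` paths. -/
def ConnAtLeast (G : Multigraph V E) (x y : V) (m : ℕ) : Prop :=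
  ∃ f : Fin m → List (E × Bool),
    (∀ i, G.IsTrail x y (f i)) ∧
    ∀ i j, i ≠ j → ((f i).map Prod.fst).Disjoint ((f j).map Prod.fst)

/-- The local edge-connectivity `λ(x,y)`. -/
noncomputable def lam (G : Multigraph V E) (x y : V) : ℕ :=
  sSup {m | G.ConnAtLeast x y m}

/-- `λ*(x,y)`: greatest even number not exceeding `λ(x,y)`. -/
noncomputable def lamStar (G : Multigraph V E) (x y : V) : ℕ :=
  2 * (G.lam x y / 2)

/-- Edge boundary `δ(X)`. -/
def cut (G : Multigraph V E) (X : Set V) : Set E :=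
  {e | (G.fst e ∈ X ∧ G.snd e ∉ X) ∨ (G.fst e ∉ X ∧ G.snd e ∈ X)}

/-- `E(X,Y)`: edges with one end in `X` and the other in `Y`. -/
def between (G : Multigraph V E) (X Y : Set V) : Set E :=
  {e | (G.fst e ∈ X ∧ G.snd e ∈ Y) ∨ (G.fst e ∈ Y ∧ G.snd e ∈ X)}

/-- Degree of a vertex. -/
noncomputable def deg (G : Multigraph V E) (v : V) : ℕ :=
  {e | G.fst e = v}.ncard + {e | G.snd e = v}.ncard

/-- `e` is incident with `v`. -/
def Inc (G : Multigraph V E) (e : E) (v : V) : Prop := G.fst e = v ∨ G.snd e = v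

/-- `k`-edge-connectedness: every nonempty proper vertex set has boundary of size at least `k`. -/
def EdgeConnected (G : Multigraph V E) (k : ℕ) : Prop :=
  ∀ X : Set V, X.Nonempty → Xᶜ.Nonempty → k ≤ (G.cut X).ncard

/-- Tail of edge `e` under the orientation `o`. -/
def tailO (G : Multigraph V E) (o : E → Bool) (e : E) : V := if o e then G.fst e else G.snd e

/-- Head of edge `e` under the orientation `o`. -/
def headO (G : Multigraph V E) (o : E → Bool) (e : E) : V := if o e then G.snd e else G.fst e

/-- Directed walk from `x` to `y` in the orientation `o`. -/
def IsDiWalk (G : Multigraph V E) (o : E → Bool) (x y : V) (l : List E) : Prop :=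
  l.Chain' (fun e f => G.headO o e = G.tailO o f) ∧
  ((l = [] ∧ x = y) ∨
    (∃ e f, l.head? = some e ∧ l.getLast? = some f ∧ G.tailO o e = x ∧ G.headO o f = y))

/-- There exist `m` pairwise arc-disjoint directed paths from `x` to `y`. -/
def DiConnAtLeast (G : Multigraph V E) (o : E → Bool) (x y : V) (m : ℕ) : Prop :=
  ∃ g : Fin m → List E,
    (∀ i, G.IsDiWalk o x y (g i) ∧ (g i).Nodup) ∧
    ∀ i j, i ≠ j → (g i).Disjoint (g j)

/-- A well-balanced orientation. -/
def WellBalanced (G : Multigraph V E) (o : E → Bool) : Prop :=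
  ∀ x y : V, x ≠ y → G.DiConnAtLeast o x y (G.lamStar x y / 2)

def Reachable (G : Multigraph V E) (x y : V) : Prop := ∃ l, G.IsWalk x y l

def Connected (G : Multigraph V E) : Prop := ∀ x y, G.Reachable x y

/-- `e` is a bridge: its endpoints cannot be joined avoiding `e`. -/
def IsBridge (G : Multigraph V E) (e : E) : Prop :=
  ¬ ∃ l, G.IsWalk (G.fst e) (G.snd e) l ∧ e ∉ l.map Prod.fst

/-- The endpoint of `e` other than `s`. -/
def other (G : Multigraph V E) (s : V) (e : E) : V :=
  if G.fst e = s then G.snd e else G.fst e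

/-- Lifting the edges `e1, e2` at `s`: delete both, add a new edge (reusing the name `e1`)
joining their other endpoints. -/
def lift (G : Multigraph V E) (s : V) (e1 e2 : E) : Multigraph V {e : E // e ≠ e2} where
  fst := fun e => if e.1 = e1 then G.other s e1 else G.fst e.1
  snd := fun e => if e.1 = e1 then G.other s e2 else G.snd e.1

/-- The pair `e1, e2` at `s` is `τ`-admissible. -/
def Admissible (G : Multigraph V E) (s : V) (τ : V → V → ℕ) (e1 e2 : E) : Prop :=
  ∀ x y : V, x ≠ s → y ≠ s → (G.lift s e1 e2).ConnAtLeast x y (τ x y)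

/-- The lifting graph `L(G,s,τ)` on the edges incident with `s`. -/
def LiftingGraph (G : Multigraph V E) (s : V) (τ : V → V → ℕ) :
    SimpleGraph {e : E // G.Inc e s} where
  Adj e f := e ≠ f ∧ (G.Admissible s τ e.1 f.1 ∨ G.Admissible s τ f.1 e.1)
  symm := ⟨fun _ _ h => ⟨h.1.symm, h.2.symm⟩⟩
  loopless := ⟨fun _ h => h.1 rfl⟩

/-- The target function `τ_A`. -/
def tauA (A : Set V) (ℓ : ℕ) : V → V → ℕ := fun x y => if x ∈ A ∧ y ∈ A then ℓ else 0

/-- `r_τ(D)`. -/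
noncomputable def rTau (s : V) (τ : V → V → ℕ) (D : Set V) : ℕ :=
  sSup {m | ∃ a ∈ D, ∃ b, b ∉ D ∧ b ≠ s ∧ τ a b = m}

/-- A dangerous set with respect to `A` and `ℓ`. -/
def DangerousA (G : Multigraph V E) (A : Set V) (ℓ : ℕ) (D : Set V) : Prop :=
  (D ∩ A).Nonempty ∧ (A \ D).Nonempty ∧ (G.cut D).ncard ≤ ℓ + 1

/-- Independent set in a simple graph. -/
def IndepIn {α : Type} (L : SimpleGraph α) (s : Set α) : Prop :=
  s.Pairwise fun a b => ¬ L.Adj a b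

/-- A one-way infinite path (ray). -/
def IsRay (G : Multigraph V E) (r : ℕ → E × Bool) : Prop :=
  (∀ n, G.dst (r n) = G.src (r (n + 1))) ∧ Function.Injective (fun n => G.src (r n))

def rayVerts (G : Multigraph V E) (r : ℕ → E × Bool) : Set V := {v | ∃ n, G.src (r n) = v}

def rayEdges (r : ℕ → E × Bool) : Set E := {e | ∃ n, (r n).1 = e}

def walkVerts (G : Multigraph V E) (l : List (E × Bool)) : Set V :=
  {v | ∃ s ∈ l, G.src s = v ∨ G.dst s = v}

/-- Two rays are equivalent if there are infinitely many pairwise vertex-disjoint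
paths between them. -/
def RayEquiv (G : Multigraph V E) (r1 r2 : ℕ → E × Bool) : Prop :=
  ∃ (P : ℕ → List (E × Bool)) (a b : ℕ → V),
    (∀ n, a n ∈ G.rayVerts r1 ∧ b n ∈ G.rayVerts r2 ∧ G.IsWalk (a n) (b n) (P n)) ∧
    ∀ m n, m ≠ n →
      Disjoint ({a m, b m} ∪ G.walkVerts (P m)) ({a n, b n} ∪ G.walkVerts (P n))

/-- `B` is boundary-linked: there are pairwise edge-disjoint equivalent rays in
`G[B]` plus its boundary such that every boundary edge is the first edge of one of them. -/
def BoundaryLinked (G : Multigraph V E) (B : Set V) : Prop :=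
  ∃ ρ : G.cut B → (ℕ → E × Bool),
    (∀ e, G.IsRay (ρ e) ∧ (ρ e 0).1 = e.1 ∧
      ∀ n, ((ρ e n).1 ∈ G.cut B ∨ (G.fst (ρ e n).1 ∈ B ∧ G.snd (ρ e n).1 ∈ B))) ∧
    (∀ e f : G.cut B, G.RayEquiv (ρ e) (ρ f)) ∧
    (∀ e f : G.cut B, e ≠ f → Disjoint (rayEdges (ρ e)) (rayEdges (ρ f)))

def LocallyFinite (G : Multigraph V E) : Prop := ∀ v, {e | G.Inc e v}.Finite

/-- Reachability by a walk avoiding the edge set `F`. -/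
def ReachAvoidE (G : Multigraph V E) (F : Set E) (x y : V) : Prop :=
  ∃ l, G.IsWalk x y l ∧ ∀ s ∈ l, s.1 ∉ F

/-- The edge set `F` separates `A'` from the end of the ray `r`. -/
def SeparatesEnd (G : Multigraph V E) (F : Set E) (A' : Set V) (r : ℕ → E × Bool) : Prop :=
  ∃ N, ∀ n, N ≤ n → ∀ a ∈ A', ¬ G.ReachAvoidE F a (G.src (r n))

/-- Reachability by a walk avoiding the vertex set `A`. -/
def ReachAvoidV (G : Multigraph V E) (A : Set V) (x y : V) : Prop :=
  x ∉ A ∧ y ∉ A ∧ ∃ l, G.IsWalk x y l ∧ Disjoint (G.walkVerts l) A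

/-- `B` is a connected component of `G - A`. -/
def IsComponentOutside (G : Multigraph V E) (A B : Set V) : Prop :=
  ∃ v, v ∉ A ∧ B = {w | G.ReachAvoidV A v w}

/-- A bond: a minimal edge cut. -/
def IsBond (G : Multigraph V E) (F : Set E) : Prop :=
  (∃ Y : Set V, Y.Nonempty ∧ Yᶜ.Nonempty ∧ F = G.cut Y) ∧
  ∀ F' : Set E, F' ⊂ F → ¬ ∃ Y : Set V, Y.Nonempty ∧ Yᶜ.Nonempty ∧ F' = G.cut Y

/-- A spanning tree given by an edge set `T`: the subgraph `(V, T)` is connected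
and contains no closed trail. -/
def IsSpanningTree (G : Multigraph V E) (T : Set E) : Prop :=
  (∀ x y : V, ∃ l, G.IsWalk x y l ∧ ∀ s ∈ l, s.1 ∈ T) ∧
  ∀ (v : V) (l : List (E × Bool)), l ≠ [] → G.IsTrail v v l → (∀ s ∈ l, s.1 ∈ T) → False

end Multigraph

end
end NW

open NW NW.Multigraph

/-!
Write `d(X) = |δ(X)|` and `E(X, Y)` for the edges between `X` and `Y`; then
`r₁ = |E(s, D₁)|`, `r₂ = |E(s, D₂)|`, `α = |E(s, D₁ ∩ D₂)|` and `r₁ + r₂ = |E(s, D₁ ∪ D₂)| + α`.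
Every set separating two vertices of `A` has `d ≥ ℓ` (easy half of Menger), while
`d(Dᵢ) ≤ ℓ + 1`. Posimodularity,
`d(D₁ ∖ D₂) + d(D₂ ∖ D₁) + 2|E(D₁ ∩ D₂, V ∖ (D₁ ∪ D₂))| = d(D₁) + d(D₂)`,
then forces `α ≤ 1`. Submodularity gives `d(D₁ ∪ D₂) ≤ ℓ + 2`, and adding `s` to `D₁ ∪ D₂`
changes the cut by `deg(s) - 2|E(s, D₁ ∪ D₂)|` while keeping it of size `≥ ℓ`, so
`|E(s, D₁ ∪ D₂)| ≤ deg(s)/2 + 1`.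
-/

namespace NW.Multigraph

variable {V E : Type} (G : Multigraph V E)

lemma cut_empty : G.cut ∅ = ∅ := by
  simp [cut]

lemma cut_compl (X : Set V) : G.cut Xᶜ = G.cut X := by
  ext e
  simp only [cut, Set.mem_compl_iff, not_not, Set.mem_ofPred_eq]
  tauto

lemma between_comm (X Y : Set V) : G.between X Y = G.between Y X := by
  ext e
  simp only [between, Set.mem_ofPred_eq]
  tauto

lemma between_union (X Y Z : Set V) :
    G.between X (Y ∪ Z) = G.between X Y ∪ G.between X Z := by
  ext e
  simp only [between, Set.mem_ofPred_eq, Set.mem_union]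
  tauto

lemma between_mono_right {X Y Z : Set V} (h : Y ⊆ Z) : G.between X Y ⊆ G.between X Z := by
  rintro e (⟨hX, hY⟩ | ⟨hY, hX⟩)
  exacts [Or.inl ⟨hX, h hY⟩, Or.inr ⟨h hY, hX⟩]

lemma mem_between_singleton_iff {s : V} {D : Set V} (hs : s ∉ D) {e : E} :
    e ∈ G.between {s} D ↔ G.Inc e s ∧ G.other s e ∈ D := by
  unfold between Inc other
  by_cases h : G.fst e = s
  · simp [h, hs]
  · simp [h, and_comm]

lemma between_singleton_inter {s : V} {Y Z : Set V} (hY : s ∉ Y) (hZ : s ∉ Z) :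
    G.between {s} (Y ∩ Z) = G.between {s} Y ∩ G.between {s} Z := by
  ext e
  rw [Set.mem_inter_iff, G.mem_between_singleton_iff hY, G.mem_between_singleton_iff hZ,
    G.mem_between_singleton_iff fun h => hY h.1, Set.mem_inter_iff]
  tauto

lemma ncard_eq_ncard_between_singleton {s : V} {D : Set V} (hs : s ∉ D)
    {F : Set {e : E // G.Inc e s}}
    (hF : ∀ e : {e : E // G.Inc e s}, e ∈ F ↔ G.other s e.1 ∈ D) :
    F.ncard = (G.between {s} D).ncard := by
  have himage : Subtype.val '' F = G.between {s} D := by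
    ext e
    rw [G.mem_between_singleton_iff hs]
    constructor
    · rintro ⟨e, he, rfl⟩
      exact ⟨e.2, (hF e).1 he⟩
    · rintro ⟨hinc, hD⟩
      exact ⟨⟨e, hinc⟩, (hF _).2 hD, rfl⟩
  rw [← himage, Set.ncard_image_of_injective _ Subtype.val_injective]

lemma inter_nonempty_of_between_singleton_nonempty {A X : Set V} {s : V}
    (hedge : ∀ e, G.fst e ∈ A ∨ G.snd e ∈ A) (hs : s ∉ A)
    (h : (G.between {s} X).Nonempty) :
    (X ∩ A).Nonempty := by
  obtain ⟨e, (⟨hfst, hsnd⟩ | ⟨hfst, hsnd⟩)⟩ := h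
  · refine ⟨_, hsnd, (hedge e).resolve_left ?_⟩
    rwa [Set.mem_singleton_iff.1 hfst]
  · refine ⟨_, hfst, (hedge e).resolve_right ?_⟩
    rwa [Set.mem_singleton_iff.1 hsnd]

section Menger

variable {G}

lemma IsWalk.exists_mem_cut {X : Set V} {l : List (E × Bool)} {x y : V}
    (hw : G.IsWalk x y l) (hx : x ∈ X) (hy : y ∉ X) : ∃ st ∈ l, st.1 ∈ G.cut X := by
  induction l generalizing x with
  | nil =>
    rcases hw.2 with ⟨_, rfl⟩ | ⟨_, _, h, _⟩
    · exact absurd hx hy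
    · simp at h
  | cons st l ih =>
    obtain ⟨hchain, hends⟩ := hw
    obtain ⟨_, t, hhead, hlast, hsrc, hdst⟩ := hends.resolve_left (by simp)
    obtain rfl := Option.some_injective _ hhead
    by_cases hmid : G.dst st ∈ X
    · cases l with
      | nil =>
        obtain rfl : st = t := by simpa using hlast
        exact absurd (hdst ▸ hmid) hy
      | cons st' l =>
        obtain ⟨hstep, htail⟩ := List.isChain_cons_cons.1 hchain
        have hwalk : G.IsWalk (G.dst st) y (st' :: l) :=
          ⟨htail, Or.inr ⟨st', t, rfl, by simpa using hlast, hstep.symm, hdst⟩⟩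
        obtain ⟨st'', hmem, hcut⟩ := ih hwalk hmid
        exact ⟨st'', List.mem_cons_of_mem _ hmem, hcut⟩
    · refine ⟨st, List.mem_cons_self, ?_⟩
      obtain ⟨e, _ | _⟩ := st <;> simp_all [cut, src, dst]

lemma ConnAtLeast.le_ncard_cut [Finite E] {x y : V} {m : ℕ} (h : G.ConnAtLeast x y m)
    {X : Set V} (hx : x ∈ X) (hy : y ∉ X) : m ≤ (G.cut X).ncard := by
  obtain ⟨f, htrail, hdisj⟩ := h
  choose st hmem hcut using fun i => (htrail i).1.exists_mem_cut hx hy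
  have hinj : Function.Injective (fun i => (⟨(st i).1, hcut i⟩ : G.cut X)) := by
    intro i j hij
    by_contra hne
    have heq : (st i).1 = (st j).1 := congrArg Subtype.val hij
    exact hdisj i j hne (List.mem_map_of_mem (hmem i)) (heq ▸ List.mem_map_of_mem (hmem j))
  simpa [Nat.card_coe_set_eq] using Nat.card_le_card_of_injective _ hinj

end Menger

def EdgeConnectedOn (A : Set V) (ℓ : ℕ) : Prop :=
  ∀ X : Set V, (X ∩ A).Nonempty → (A \ X).Nonempty → ℓ ≤ (G.cut X).ncard

lemma edgeConnectedOn_of_connAtLeast [Finite E] {A : Set V} {ℓ : ℕ}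
    (h : ∀ x y, x ∈ A → y ∈ A → G.ConnAtLeast x y ℓ) : G.EdgeConnectedOn A ℓ :=
  fun _ ⟨x, hxX, hxA⟩ ⟨y, hyA, hyX⟩ => (h x y hxA hyA).le_ncard_cut hxX hyX

lemma ncard_eq_sum_ite [Fintype E] (S : Set E) [DecidablePred (· ∈ S)] :
    S.ncard = ∑ e, if e ∈ S then 1 else 0 := by
  rw [Set.ncard_eq_toFinset_card', ← Finset.card_filter]
  congr 1
  ext e
  simp

lemma ncard_cut_inter_add_ncard_cut_union [Finite E] (X Y : Set V) :
    (G.cut (X ∩ Y)).ncard + (G.cut (X ∪ Y)).ncard + 2 * (G.between (X \ Y) (Y \ X)).ncard =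
      (G.cut X).ncard + (G.cut Y).ncard := by
  classical
  have := Fintype.ofFinite E
  simp only [ncard_eq_sum_ite, Finset.mul_sum, ← Finset.sum_add_distrib]
  refine Finset.sum_congr rfl fun e _ => ?_
  by_cases G.fst e ∈ X <;> by_cases G.fst e ∈ Y <;> by_cases G.snd e ∈ X <;>
    by_cases G.snd e ∈ Y <;> simp [cut, between, *]

lemma ncard_cut_diff_add_ncard_cut_diff [Finite E] (X Y : Set V) :
    (G.cut (X \ Y)).ncard + (G.cut (Y \ X)).ncard + 2 * (G.between (X ∩ Y) (X ∪ Y)ᶜ).ncard =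
      (G.cut X).ncard + (G.cut Y).ncard := by
  have h := G.ncard_cut_inter_add_ncard_cut_union X Yᶜ
  rwa [cut_compl, ← Set.sdiff_eq, Set.sdiff_compl,
    show X ∪ Yᶜ = (Y \ X)ᶜ by ext; simp; tauto, cut_compl,
    show Yᶜ \ X = (X ∪ Y)ᶜ by ext; simp; tauto] at h

lemma ncard_cut_union_singleton [Finite E] {X : Set V} {s : V} (hs : s ∉ X) :
    (G.cut (X ∪ {s})).ncard + 2 * (G.between {s} X).ncard =
      (G.cut X).ncard + (G.cut {s}).ncard := by
  have h := G.ncard_cut_inter_add_ncard_cut_union X {s}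
  rwa [Set.inter_singleton_eq_empty.2 hs, cut_empty, Set.ncard_empty, zero_add,
    Set.sdiff_singleton_eq_self hs,
    sdiff_eq_left.2 (Set.disjoint_singleton_left.2 hs), between_comm] at h

lemma deg_eq_ncard_cut_singleton [Finite E] {s : V} (hloop : ∀ e, G.fst e = s → G.snd e ≠ s) :
    G.deg s = (G.cut {s}).ncard := by
  have hcut : G.cut {s} = {e | G.fst e = s} ∪ {e | G.snd e = s} := by
    ext e
    simp only [cut, Set.mem_singleton_iff, Set.mem_ofPred_eq, Set.mem_union]
    have := hloop e
    tauto
  rw [deg, hcut, Set.ncard_union_eq]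
  exact Set.disjoint_left.2 fun e => hloop e

lemma between_diff_nonempty_of_ncard_lt [Finite E] {X Y Z : Set V}
    (h : (G.between X (Y ∩ Z)).ncard < (G.between X Y).ncard) :
    (G.between X (Y \ Z)).Nonempty := by
  rw [Set.nonempty_iff_ne_empty]
  intro hempty
  have hle := Set.ncard_union_le (G.between X (Y ∩ Z)) (G.between X (Y \ Z))
  rw [← between_union, Set.inter_union_sdiff, hempty, Set.ncard_empty] at hle
  omega

section Dangerous

variable {G} [Finite E] {A : Set V} {ℓ : ℕ} {D1 D2 : Set V}

lemma ncard_between_inter_compl_union_le_one (hA : G.EdgeConnectedOn A ℓ)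
    (hD1 : G.DangerousA A ℓ D1) (hD2 : G.DangerousA A ℓ D2)
    (h12 : ((D1 \ D2) ∩ A).Nonempty) (h21 : ((D2 \ D1) ∩ A).Nonempty) :
    (G.between (D1 ∩ D2) (D1 ∪ D2)ᶜ).ncard ≤ 1 := by
  have hposi := G.ncard_cut_diff_add_ncard_cut_diff D1 D2
  have hcut12 := hA (D1 \ D2) h12 (h21.mono fun v hv => ⟨hv.2, fun h => hv.1.2 h.1⟩)
  have hcut21 := hA (D2 \ D1) h21 (h12.mono fun v hv => ⟨hv.2, fun h => hv.1.2 h.1⟩)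
  have hcutD1 := hD1.2.2
  have hcutD2 := hD2.2.2
  omega

lemma two_mul_ncard_between_singleton_union_le (hA : G.EdgeConnectedOn A ℓ)
    (hD1 : G.DangerousA A ℓ D1) (hD2 : G.DangerousA A ℓ D2) {s : V} (hs : s ∉ D1 ∪ D2)
    (hloop : ∀ e, G.fst e = s → G.snd e ≠ s) (h12 : ((D1 ∩ D2) ∩ A).Nonempty)
    (hout : (A \ (D1 ∪ D2 ∪ {s})).Nonempty) :
    2 * (G.between {s} (D1 ∪ D2)).ncard ≤ G.deg s + 2 := by
  have hsub := G.ncard_cut_inter_add_ncard_cut_union D1 D2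
  have hadd := G.ncard_cut_union_singleton hs
  have hcut12 := hA (D1 ∩ D2) h12
    (hout.mono fun v hv => ⟨hv.1, fun h => hv.2 (Or.inl (Or.inl h.1))⟩)
  have hcutW := hA (D1 ∪ D2 ∪ {s})
    (h12.mono fun v hv => ⟨Or.inl (Or.inl hv.1.1), hv.2⟩) hout
  have hcutD1 := hD1.2.2
  have hcutD2 := hD2.2.2
  rw [G.deg_eq_ncard_cut_singleton hloop]
  omega

end Dangerous

end NW.Multigraph

open NW in
theorem stmt4_general {V E : Type} [Finite E] (G : Multigraph V E)
    (ℓ : ℕ) (A : Set V)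
    (hconnA : ∀ x y, x ∈ A → y ∈ A → G.ConnAtLeast x y ℓ)
    (hedge : ∀ e, G.fst e ∈ A ∨ G.snd e ∈ A)
    (s : V) (hs : s ∉ A)
    (F1 F2 : Set {e : E // G.Inc e s})
    (D1 D2 : Set V)
    (hD1 : G.DangerousA A ℓ D1) (hD2 : G.DangerousA A ℓ D2)
    (hsD1 : s ∉ D1) (hsD2 : s ∉ D2)
    (hF1 : ∀ e : {e : E // G.Inc e s}, e ∈ F1 ↔ G.other s e.1 ∈ D1)
    (hF2 : ∀ e : {e : E // G.Inc e s}, e ∈ F2 ↔ G.other s e.1 ∈ D2)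
    (hα : 0 < (F1 ∩ F2).ncard)
    (hr1 : (F1 ∩ F2).ncard < F1.ncard)
    (hr2 : (F1 ∩ F2).ncard < F2.ncard)
    (hout : ∃ a ∈ A, a ∉ D1 ∪ D2 ∪ {s}) :
    F1.ncard + F2.ncard ≤ G.deg s / 2 + 2 := by
  have hconn := G.edgeConnectedOn_of_connAtLeast hconnA
  have hmeetA : ∀ X, (G.between {s} X).Nonempty → (X ∩ A).Nonempty :=
    fun _ => G.inter_nonempty_of_between_singleton_nonempty hedge hs
  have hloop : ∀ e, G.fst e = s → G.snd e ≠ s := fun e h1 h2 => by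
    rcases hedge e with h | h <;> simp_all
  have hsD : s ∉ D1 ∪ D2 := by simp [hsD1, hsD2]
  rw [G.ncard_eq_ncard_between_singleton hsD1 hF1] at hr1 ⊢
  rw [G.ncard_eq_ncard_between_singleton hsD2 hF2] at hr2 ⊢
  rw [G.ncard_eq_ncard_between_singleton (D := D1 ∩ D2) (F := F1 ∩ F2) (fun h => hsD1 h.1)
    fun e => and_congr (hF1 e) (hF2 e)] at hα hr1 hr2
  rw [Set.inter_comm] at hr2
  have hcommon : (G.between {s} (D1 ∩ D2)).ncard ≤ 1 := by
    refine (Set.ncard_le_ncard ?_).trans (ncard_between_inter_compl_union_le_one hconn hD1 hD2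
      (hmeetA _ (G.between_diff_nonempty_of_ncard_lt hr1))
      (hmeetA _ (G.between_diff_nonempty_of_ncard_lt hr2)))
    rw [between_comm]
    exact G.between_mono_right (Set.singleton_subset_iff.2 hsD)
  have hunion := two_mul_ncard_between_singleton_union_le hconn hD1 hD2 hsD hloop
    (hmeetA _ (Set.nonempty_of_ncard_ne_zero hα.ne')) hout
  have hincl := Set.ncard_union_add_ncard_inter (G.between {s} D1) (G.between {s} D2)
  rw [← between_union, ← G.between_singleton_inter hsD1 hsD2] at hincl
  omega

open NW in
/-- Upper bound on the sizes of two intersecting independent sets coming from dangerous sets. -/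
theorem stmt4 {V E : Type} [Finite V] [Finite E] (G : Multigraph V E)
    (ℓ : ℕ) (hl : 4 ≤ ℓ)
    (A : Set V) (hA : A ≠ Set.univ)
    (hconnA : ∀ x y, x ∈ A → y ∈ A → G.ConnAtLeast x y ℓ)
    (hedge : ∀ e, G.fst e ∈ A ∨ G.snd e ∈ A)
    (hloop : ∀ e, G.fst e ≠ G.snd e)
    (s : V) (hs : s ∉ A)
    (hbridge : ∀ e, G.Inc e s → ¬ G.IsBridge e)
    (F1 F2 : Set {e : E // G.Inc e s})
    (hI1 : Multigraph.IndepIn (G.LiftingGraph s (Multigraph.tauA A ℓ)) F1)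
    (hI2 : Multigraph.IndepIn (G.LiftingGraph s (Multigraph.tauA A ℓ)) F2)
    (D1 D2 : Set V)
    (hD1 : G.DangerousA A ℓ D1) (hD2 : G.DangerousA A ℓ D2)
    (hsD1 : s ∉ D1) (hsD2 : s ∉ D2)
    (hF1 : ∀ e : {e : E // G.Inc e s}, e ∈ F1 ↔ G.other s e.1 ∈ D1)
    (hF2 : ∀ e : {e : E // G.Inc e s}, e ∈ F2 ↔ G.other s e.1 ∈ D2)
    (hα : 0 < (F1 ∩ F2).ncard)
    (hr1 : (F1 ∩ F2).ncard < F1.ncard)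
    (hr2 : (F1 ∩ F2).ncard < F2.ncard)
    (hout : ∃ a ∈ A, a ∉ D1 ∪ D2 ∪ {s}) :
    F1.ncard + F2.ncard ≤ G.deg s / 2 + 2 :=
  stmt4_general G ℓ A hconnA hedge s hs F1 F2 D1 D2 hD1 hD2 hsD1 hsD2 hF1 hF2 hα hr1 hr2 hout
end

section
/- In a finite multigraph, if after lifting an admissible pair of edges {e1, e2} at a vertex s the pair {e3, e4} becomes admissible, then {e3, e4} was already admissible in the original graph. -/
open NW NW.Multigraph

/-! Let `K` be `G` with `{e3, e4}` lifted. Lifting `{e1, e2}` in `K` gives, up to renaming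
edges, the graph obtained from `G` by lifting first `{e1, e2}` and then `{e3, e4}`, so the
hypothesis provides the required edge-disjoint trails in a lift of `K`. Lifting never increases
local edge-connectivity, because a trail through the new edge can be rerouted along the two edges
at `s` it replaced; hence the trails already exist in `K`. -/

namespace NW.Multigraph

variable {V E F : Type} {G : Multigraph V E} {x y z : V}

lemma src_not (G : Multigraph V E) (e : E) (b : Bool) : G.src (e, !b) = G.dst (e, b) := by
  cases b <;> rfl

lemma dst_not (G : Multigraph V E) (e : E) (b : Bool) : G.dst (e, !b) = G.src (e, b) := by
  cases b <;> rfl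

lemma isWalk_singleton (G : Multigraph V E) (st : E × Bool) :
    G.IsWalk (G.src st) (G.dst st) [st] :=
  ⟨List.isChain_singleton st, Or.inr ⟨st, st, rfl, rfl, rfl, rfl⟩⟩

lemma isWalk_pair {st st' : E × Bool} (h : G.dst st = G.src st') :
    G.IsWalk (G.src st) (G.dst st') [st, st'] :=
  ⟨List.isChain_pair.mpr h, Or.inr ⟨st, st', rfl, rfl, rfl, rfl⟩⟩

lemma IsWalk.of_cons {st : E × Bool} {l : List (E × Bool)} (h : G.IsWalk x y (st :: l)) :
    G.src st = x ∧ G.IsWalk (G.dst st) y l := by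
  obtain ⟨hchain, ⟨hnil, _⟩ | ⟨a, b, hhead, hlast, hsrc, hdst⟩⟩ := h
  · exact absurd hnil (List.cons_ne_nil _ _)
  obtain rfl : st = a := by simpa using hhead
  rw [List.Chain', List.isChain_cons] at hchain
  refine ⟨hsrc, hchain.2, ?_⟩
  cases l with
  | nil =>
    obtain rfl : st = b := by simpa using hlast
    exact Or.inl ⟨rfl, hdst⟩
  | cons r rs =>
    refine Or.inr ⟨r, b, rfl, ?_, (hchain.1 r rfl).symm, hdst⟩
    rwa [List.getLast?_cons_cons] at hlast

lemma IsWalk.append {l₁ l₂ : List (E × Bool)} (h₁ : G.IsWalk x y l₁) (h₂ : G.IsWalk y z l₂) :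
    G.IsWalk x z (l₁ ++ l₂) := by
  obtain ⟨c₁, ⟨rfl, rfl⟩ | ⟨a₁, b₁, hh₁, hl₁, hs₁, hd₁⟩⟩ := h₁
  · simpa using h₂
  obtain ⟨c₂, ⟨rfl, rfl⟩ | ⟨a₂, b₂, hh₂, hl₂, hs₂, hd₂⟩⟩ := h₂
  · rw [List.append_nil]; exact ⟨c₁, Or.inr ⟨a₁, b₁, hh₁, hl₁, hs₁, hd₁⟩⟩
  refine ⟨List.isChain_append.mpr ⟨c₁, c₂, ?_⟩, Or.inr ⟨a₁, b₂, ?_, ?_, hs₁, hd₂⟩⟩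
  · simp only [hl₁, hh₂, Option.mem_def, Option.some.injEq]
    rintro _ rfl _ rfl
    rw [hd₁, hs₂]
  · rw [List.head?_append, hh₁]; rfl
  · rw [List.getLast?_append, hl₂]; rfl

lemma IsWalk.flatMap {H : Multigraph V E} {K : Multigraph V F} {R : E × Bool → List (F × Bool)}
    (hR : ∀ st, K.IsWalk (H.src st) (H.dst st) (R st)) :
    ∀ {l : List (E × Bool)} {x y : V}, H.IsWalk x y l → K.IsWalk x y (l.flatMap R)
  | [], _, _, h => by
      obtain ⟨_, ⟨_, rfl⟩ | ⟨_, _, hhead, _⟩⟩ := h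
      · exact ⟨List.isChain_nil, Or.inl ⟨rfl, rfl⟩⟩
      · simp at hhead
  | st :: _, _, _, h => by
      obtain ⟨rfl, htail⟩ := h.of_cons
      exact (hR st).append (IsWalk.flatMap hR htail)

lemma ConnAtLeast.of_trailReplacement {H : Multigraph V E} {K : Multigraph V F} {m : ℕ}
    (R : E × Bool → List (F × Bool))
    (hR : ∀ st, K.IsTrail (H.src st) (H.dst st) (R st))
    (hdisj : ∀ st st', st.1 ≠ st'.1 → ((R st).map Prod.fst).Disjoint ((R st').map Prod.fst))
    (h : H.ConnAtLeast x y m) : K.ConnAtLeast x y m := by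
  obtain ⟨f, hf, hfdisj⟩ := h
  refine ⟨fun i => (f i).flatMap R, fun i => ⟨(hf i).1.flatMap fun st => (hR st).1, ?_⟩,
    fun i j hij z hzi hzj => ?_⟩
  · rw [List.map_flatMap, List.nodup_flatMap]
    exact ⟨fun st _ => (hR st).2, (List.pairwise_map.mp (hf i).2).imp (hdisj _ _)⟩
  · rw [List.map_flatMap, List.mem_flatMap] at hzi hzj
    obtain ⟨a, ha, hza⟩ := hzi
    obtain ⟨b, hb, hzb⟩ := hzj
    by_cases hab : a.1 = b.1
    · exact hfdisj i j hij (List.mem_map_of_mem ha) (hab ▸ List.mem_map_of_mem hb)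
    · exact hdisj a b hab hza hzb

lemma ConnAtLeast.of_edgeMap {H : Multigraph V E} {K : Multigraph V F} {m : ℕ} (φ : E → F)
    (hφ : φ.Injective) (hfst : ∀ e, K.fst (φ e) = H.fst e) (hsnd : ∀ e, K.snd (φ e) = H.snd e)
    (h : H.ConnAtLeast x y m) : K.ConnAtLeast x y m := by
  refine ConnAtLeast.of_trailReplacement (fun st => [(φ st.1, st.2)])
    (fun ⟨e, b⟩ => ⟨?_, by simp⟩) (fun st st' hne => by simpa using (hφ.ne hne).symm) h
  have hsrc : K.src (φ e, b) = H.src (e, b) := by cases b <;> simp [src, hfst, hsnd]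
  have hdst : K.dst (φ e, b) = H.dst (e, b) := by cases b <;> simp [dst, hfst, hsnd]
  simpa [hsrc, hdst] using K.isWalk_singleton (φ e, b)

section Lift

open Classical

variable {s : V} {a b : E}

lemma lift_fst_of_ne {e : {e : E // e ≠ b}} (he : e.1 ≠ a) :
    (G.lift s a b).fst e = G.fst e.1 :=
  if_neg he

lemma lift_snd_of_ne {e : {e : E // e ≠ b}} (he : e.1 ≠ a) :
    (G.lift s a b).snd e = G.snd e.1 :=
  if_neg he

lemma lift_other_of_ne {e : {e : E // e ≠ b}} (he : e.1 ≠ a) :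
    (G.lift s a b).other s e = G.other s e.1 := by
  unfold other
  rw [lift_fst_of_ne he, lift_snd_of_ne he]

lemma Inc.lift_of_ne {e : {e : E // e ≠ b}} (h : G.Inc e.1 s) (he : e.1 ≠ a) :
    (G.lift s a b).Inc e s := by
  rwa [Inc, lift_fst_of_ne he, lift_snd_of_ne he]

lemma Inc.exists_src_dst {e : E} (h : G.Inc e s) :
    ∃ o, G.src (e, o) = G.other s e ∧ G.dst (e, o) = s := by
  by_cases hfst : G.fst e = s
  · exact ⟨false, by simp [src, dst, other, hfst]⟩
  · exact ⟨true, by simp [src, dst, other, hfst, h.resolve_left hfst]⟩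

/-- The lifted edge is replaced by the two-edge path through `s` it came from. -/
lemma ConnAtLeast.of_lift (ha : G.Inc a s) (hb : G.Inc b s) {m : ℕ}
    (h : (G.lift s a b).ConnAtLeast x y m) : G.ConnAtLeast x y m := by
  obtain ⟨oa, hoa_src, hoa_dst⟩ := ha.exists_src_dst
  obtain ⟨ob, hob_src, hob_dst⟩ := hb.exists_src_dst
  let R : {e : E // e ≠ b} × Bool → List (E × Bool) := fun st =>
    if st.1.1 = a then (if st.2 then [(a, oa), (b, !ob)] else [(b, ob), (a, !oa)])
    else [(st.1.1, st.2)]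
  have hR_edges : ∀ st z, z ∈ (R st).map Prod.fst ↔ z = st.1.1 ∨ st.1.1 = a ∧ z = b := by
    rintro ⟨e, o⟩ z
    by_cases hea : e.1 = a <;> cases o <;> simp [R, hea, or_comm]
  refine ConnAtLeast.of_trailReplacement R (fun ⟨e, o⟩ => ⟨?_, ?_⟩) ?_ h
  · by_cases hea : e.1 = a
    · have hfst : (G.lift s a b).fst e = G.other s a := if_pos hea
      have hsnd : (G.lift s a b).snd e = G.other s b := if_pos hea
      cases o
      · have hw := isWalk_pair (G := G) (st := (b, ob)) (st' := (a, !oa))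
          (by rw [src_not, hob_dst, hoa_dst])
        rw [hob_src, dst_not, hoa_src] at hw
        simpa [R, hea, src, dst, hfst, hsnd] using hw
      · have hw := isWalk_pair (G := G) (st := (a, oa)) (st' := (b, !ob))
          (by rw [src_not, hob_dst, hoa_dst])
        rw [hoa_src, dst_not, hob_src] at hw
        simpa [R, hea, src, dst, hfst, hsnd] using hw
    · have hsrc : G.src (e.1, o) = (G.lift s a b).src (e, o) := by
        cases o <;> simp [src, lift_fst_of_ne hea, lift_snd_of_ne hea]
      have hdst : G.dst (e.1, o) = (G.lift s a b).dst (e, o) := by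
        cases o <;> simp [dst, lift_fst_of_ne hea, lift_snd_of_ne hea]
      simpa [R, hea, hsrc, hdst] using G.isWalk_singleton (e.1, o)
  · by_cases hea : e.1 = a
    · have hab : a ≠ b := hea ▸ e.2
      cases o <;> simp [R, hea, hab, hab.symm]
    · simp [R, hea]
  · intro st st' hne z hz hz'
    have hne' : st.1.1 ≠ st'.1.1 := fun h => hne (Subtype.ext h)
    have hb : st.1.1 ≠ b := st.1.2
    have hb' : st'.1.1 ≠ b := st'.1.2
    grind

lemma lift_lift_fst {c d : E} (hca : c ≠ a) (hcb : c ≠ b) (hdb : d ≠ b)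
    (e : {e : {e : E // e ≠ b} // e ≠ ⟨d, hdb⟩}) :
    ((G.lift s a b).lift s ⟨c, hcb⟩ ⟨d, hdb⟩).fst e =
      if e.1.1 = c then G.other s c else if e.1.1 = a then G.other s a else G.fst e.1.1 := by
  rw [lift, lift_other_of_ne hca]
  simp only [Subtype.ext_iff]
  rfl

lemma lift_lift_snd {c d : E} (hda : d ≠ a) (hcb : c ≠ b) (hdb : d ≠ b)
    (e : {e : {e : E // e ≠ b} // e ≠ ⟨d, hdb⟩}) :
    ((G.lift s a b).lift s ⟨c, hcb⟩ ⟨d, hdb⟩).snd e =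
      if e.1.1 = c then G.other s d else if e.1.1 = a then G.other s b else G.snd e.1.1 := by
  rw [lift, lift_other_of_ne (e := ⟨d, hdb⟩) hda]
  simp only [Subtype.ext_iff]
  rfl

/-- Lifting two disjoint pairs at `s` in either order gives the same graph up to renaming
edges. -/
lemma ConnAtLeast.lift_lift_swap {c d : E} (hac : a ≠ c) (had : a ≠ d) (hbc : b ≠ c)
    (hbd : b ≠ d) {m : ℕ}
    (h : ((G.lift s a b).lift s ⟨c, hbc.symm⟩ ⟨d, hbd.symm⟩).ConnAtLeast x y m) :
    ((G.lift s c d).lift s ⟨a, had⟩ ⟨b, hbd⟩).ConnAtLeast x y m := by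
  refine ConnAtLeast.of_edgeMap
    (fun e => ⟨⟨e.1.1, fun h => e.2 (Subtype.ext h)⟩, fun h => e.1.2 (congrArg Subtype.val h)⟩)
    (fun e e' h => Subtype.ext (Subtype.ext (congrArg (·.1.1) h))) (fun e => ?_) (fun e => ?_) h
  · rw [lift_lift_fst hac, lift_lift_fst hac.symm]
    split_ifs <;> simp_all
  · rw [lift_lift_snd hbc, lift_lift_snd had.symm]
    split_ifs <;> simp_all

end Lift

end NW.Multigraph

open NW in
theorem stmt9_general {V E : Type} (G : Multigraph V E) (s : V)
    (τ : V → V → ℕ)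
    (e1 e2 e3 e4 : E)
    (h1 : G.Inc e1 s) (h2 : G.Inc e2 s)
    (h13 : e1 ≠ e3) (h14 : e1 ≠ e4)
    (h23 : e2 ≠ e3) (h24 : e2 ≠ e4)
    (hadm34 : (G.lift s e1 e2).Admissible s τ ⟨e3, h23.symm⟩ ⟨e4, h24.symm⟩) :
    G.Admissible s τ e3 e4 := fun x y hx hy =>
  ((hadm34 x y hx hy).lift_lift_swap h13 h14 h23 h24).of_lift
    (Inc.lift_of_ne h1 h13) (Inc.lift_of_ne h2 h23)

open NW in
/-- If after lifting the admissible pair {e1,e2} the pair {e3,e4} is admissible,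
then {e3,e4} was admissible already in the original graph. -/
theorem stmt9 {V E : Type} [Finite V] [Finite E] (G : Multigraph V E) (s : V)
    (τ : V → V → ℕ)
    (hloop : ∀ e, G.fst e ≠ G.snd e)
    (e1 e2 e3 e4 : E)
    (h1 : G.Inc e1 s) (h2 : G.Inc e2 s) (h3 : G.Inc e3 s) (h4 : G.Inc e4 s)
    (h12 : e1 ≠ e2) (h13 : e1 ≠ e3) (h14 : e1 ≠ e4)
    (h23 : e2 ≠ e3) (h24 : e2 ≠ e4) (h34 : e3 ≠ e4)
    (hadm12 : G.Admissible s τ e1 e2)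
    (hadm34 : (G.lift s e1 e2).Admissible s τ ⟨e3, h23.symm⟩ ⟨e4, h24.symm⟩) :
    G.Admissible s τ e3 e4 :=
  stmt9_general G s τ e1 e2 e3 e4 h1 h2 h13 h14 h23 h24 hadm34
end
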